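/- Let (E,d) be a complete separable metric space, x₀ ∈ E, and μ a Borel probability measure on E with ∫ d(y,x₀)² dμ(y) < ∞. Let ν = h·μ be a probability measure with ∫ d(x,x₀)² dν(x) < ∞, and let a > 0 be such that ν(h ≤ a) > 0, with truncated measure ν_a. Then W₂²(ν,μ) ≤ W₂²(ν_a,μ) + ∫ q₂(x)·h(x)·1_{h > a}(x) dμ(x), where q₂(x) = 2·d(x,x₀)² + 2·∫ d(y,x₀)² dμ(y). -/

import Mathlib

open MeasureTheory ENNReal
open scoped Classical

noncomputable section

/-- `π` is a coupling of the probability measures `μ` and `ν`: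
its marginal distributions are `μ` and `ν`. -/
def IsCoupling {E : Type*} [MeasurableSpace E] (π : Measure (E × E)) (μ ν : Measure E) : Prop :=
  π.map Prod.fst = μ ∧ π.map Prod.snd = ν

/-- The `p`-th power of the `L^p` Wasserstein distance, `W_p^p(μ,ν)`, as the infimum of the
transportation cost over all couplings. -/
def Wcost {E : Type*} [MetricSpace E] [MeasurableSpace E] (p : ℝ) (μ ν : Measure E) : ℝ≥0∞ :=
  ⨅ (π : Measure (E × E)) (_ : IsProbabilityMeasure π) (_ : IsCoupling π μ ν),
    ∫⁻ z, ENNReal.ofReal (dist z.1 z.2 ^ p) ∂π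

/-- Relative entropy (Kullback-Leibler information) `H(ν,μ)`:
`∫ log (dν/dμ) dν` if `ν ≪ μ` (and the integral exists), `+∞` otherwise. -/
def relEnt {Ω : Type*} [MeasurableSpace Ω] (ν μ : Measure Ω) : ℝ≥0∞ :=
  if ν ≪ μ ∧ Integrable (fun x => Real.log ((ν.rnDeriv μ) x).toReal) ν
  then ENNReal.ofReal (∫ x, Real.log ((ν.rnDeriv μ) x).toReal ∂ν)
  else ∞

/-- The transportation cost inequality `T_p(C)`: `W_p(μ,ν) ≤ √(2 C H(ν,μ))` for every
probability measure `ν`. -/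
def TCI {E : Type*} [MetricSpace E] [MeasurableSpace E] (p : ℝ) (C : ℝ) (μ : Measure E) : Prop :=
  ∀ ν : Measure E, IsProbabilityMeasure ν →
    Wcost p μ ν ^ (1 / p) ≤ (ENNReal.ofReal (2 * C) * relEnt ν μ) ^ (1 / 2 : ℝ)

/-- The measure `ν = h·μ`. -/
def densMeas {Ω : Type*} [MeasurableSpace Ω] (μ : Measure Ω) (h : Ω → ℝ) : Measure Ω :=
  μ.withDensity fun x => ENNReal.ofReal (h x)

/-- The truncated measure `ν_a = (1/ν(h ≤ a)) · h · 1_{h ≤ a} · μ` for `ν = h·μ`. -/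
def truncMeas {Ω : Type*} [MeasurableSpace Ω] (μ : Measure Ω) (h : Ω → ℝ) (a : ℝ) : Measure Ω :=
  ((densMeas μ h) {x | h x ≤ a})⁻¹ • (densMeas μ h).restrict {x | h x ≤ a}

section Coupling

variable {α : Type*} [MeasurableSpace α]

theorem IsCoupling.add {π₁ π₂ : Measure (α × α)} {μ₁ μ₂ ν₁ ν₂ : Measure α}
    (h₁ : IsCoupling π₁ μ₁ ν₁) (h₂ : IsCoupling π₂ μ₂ ν₂) :
    IsCoupling (π₁ + π₂) (μ₁ + μ₂) (ν₁ + ν₂) :=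
  ⟨by rw [Measure.map_add _ _ measurable_fst, h₁.1, h₂.1],
    by rw [Measure.map_add _ _ measurable_snd, h₁.2, h₂.2]⟩

theorem IsCoupling.smul {π : Measure (α × α)} {μ ν : Measure α} (hπ : IsCoupling π μ ν)
    (c : ℝ≥0∞) : IsCoupling (c • π) (c • μ) (c • ν) :=
  ⟨by rw [Measure.map_smul, hπ.1], by rw [Measure.map_smul, hπ.2]⟩

theorem isCoupling_prod (μ ν : Measure α) [SFinite ν] :
    IsCoupling (μ.prod ν) (ν Set.univ • μ) (μ Set.univ • ν) :=
  ⟨Measure.map_fst_prod, Measure.map_snd_prod⟩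

theorem IsCoupling.isProbabilityMeasure {π : Measure (α × α)} {μ ν : Measure α}
    (hπ : IsCoupling π μ ν) [IsProbabilityMeasure μ] : IsProbabilityMeasure π :=
  ⟨by rw [← Set.preimage_univ (f := Prod.fst), ← Measure.map_apply measurable_fst .univ, hπ.1,
    measure_univ]⟩

end Coupling

/-- Also when `ν s = 0`: then `(ν s)⁻¹ = ∞`, but `ν.restrict s = 0`. -/
theorem measure_smul_inv_smul_restrict {α : Type*} [MeasurableSpace α] (ν : Measure α)
    {s : Set α} (hs : ν s ≠ ∞) : ν s • (ν s)⁻¹ • ν.restrict s = ν.restrict s := by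
  rcases eq_or_ne (ν s) 0 with h0 | h0
  · simp [Measure.restrict_eq_zero.mpr h0]
  · rw [smul_smul, ENNReal.mul_inv_cancel h0 hs, one_smul]

section Wasserstein

variable {E : Type*} [MetricSpace E] [MeasurableSpace E]

theorem wcost_le_lintegral {p : ℝ} {μ ν : Measure E} [IsProbabilityMeasure μ]
    {π : Measure (E × E)} (hπ : IsCoupling π μ ν) :
    Wcost p μ ν ≤ ∫⁻ z, ENNReal.ofReal (dist z.1 z.2 ^ p) ∂π :=
  haveI := hπ.isProbabilityMeasure
  iInf₂_le_of_le π ‹_› (iInf_le _ hπ)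

/-- Keep the coupling `π` of `ν` conditioned on `s` with `μ`, and send the mass of `ν` outside `s`
independently onto `μ`: `ν s • π + (ν.restrict sᶜ).prod μ` is a coupling of `ν` and `μ`. -/
theorem wcost_le_wcost_restrict_add (p : ℝ) (ν μ : Measure E) [IsProbabilityMeasure ν]
    [IsProbabilityMeasure μ] {s : Set E} (hs : MeasurableSet s) :
    Wcost p ν μ ≤ Wcost p ((ν s)⁻¹ • ν.restrict s) μ +
      ∫⁻ x in sᶜ, ∫⁻ y, ENNReal.ofReal (dist x y ^ p) ∂μ ∂ν := by
  simp only [Wcost, ENNReal.iInf_add]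
  refine le_iInf₂ fun π _ => le_iInf fun hπ => ?_
  have hglued : IsCoupling (ν s • π + (ν.restrict sᶜ).prod μ) ν μ := by
    have := (hπ.smul (ν s)).add (isCoupling_prod (ν.restrict sᶜ) μ)
    rwa [measure_smul_inv_smul_restrict ν (measure_ne_top ν s), measure_univ, one_smul,
      Measure.restrict_add_restrict_compl hs, Measure.restrict_apply_univ, ← add_smul,
      measure_add_measure_compl hs, measure_univ, one_smul] at this
  calc Wcost p ν μ
      ≤ ∫⁻ z, ENNReal.ofReal (dist z.1 z.2 ^ p) ∂(ν s • π + (ν.restrict sᶜ).prod μ) :=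
        wcost_le_lintegral hglued
    _ = ν s * ∫⁻ z, ENNReal.ofReal (dist z.1 z.2 ^ p) ∂π +
          ∫⁻ z, ENNReal.ofReal (dist z.1 z.2 ^ p) ∂(ν.restrict sᶜ).prod μ := by
        rw [lintegral_add_measure, lintegral_smul_measure, smul_eq_mul]
    _ ≤ _ := add_le_add (mul_le_of_le_one_left' prob_le_one) (lintegral_prod_le _)

end Wasserstein

theorem dist_sq_le_two_mul_add {E : Type*} [PseudoMetricSpace E] (x y z : E) :
    dist x y ^ 2 ≤ 2 * dist x z ^ 2 + 2 * dist y z ^ 2 := by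
  nlinarith [dist_triangle_right x y z, dist_nonneg (x := x) (y := y),
    sq_nonneg (dist x z - dist y z)]

theorem lintegral_dist_sq_le {E : Type*} [PseudoMetricSpace E] [MeasurableSpace E]
    (μ : Measure E) [IsProbabilityMeasure μ] {x₀ : E}
    (hmom : Integrable (fun y => dist y x₀ ^ 2) μ) (x : E) :
    ∫⁻ y, ENNReal.ofReal (dist x y ^ 2) ∂μ ≤
      ENNReal.ofReal (2 * dist x x₀ ^ 2 + 2 * ∫ y, dist y x₀ ^ 2 ∂μ) := by
  have hint : Integrable (fun y => 2 * dist x x₀ ^ 2 + 2 * dist y x₀ ^ 2) μ :=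
    (integrable_const _).add (hmom.const_mul 2)
  calc ∫⁻ y, ENNReal.ofReal (dist x y ^ 2) ∂μ
      ≤ ∫⁻ y, ENNReal.ofReal (2 * dist x x₀ ^ 2 + 2 * dist y x₀ ^ 2) ∂μ :=
        lintegral_mono fun y => ENNReal.ofReal_le_ofReal (dist_sq_le_two_mul_add x y x₀)
    _ = ENNReal.ofReal (∫ y, 2 * dist x x₀ ^ 2 + 2 * dist y x₀ ^ 2 ∂μ) :=
        (ofReal_integral_eq_lintegral_ofReal hint (ae_of_all _ fun y => by positivity)).symm
    _ = ENNReal.ofReal (2 * dist x x₀ ^ 2 + 2 * ∫ y, dist y x₀ ^ 2 ∂μ) := by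
        rw [integral_add (integrable_const _) (hmom.const_mul 2), integral_const,
          integral_const_mul, probReal_univ, one_smul]

theorem setIntegral_mul_eq_setIntegral_densMeas {Ω : Type*} [MeasurableSpace Ω]
    {μ : Measure Ω} {h : Ω → ℝ} (hmeas : Measurable h) (hpos : ∀ x, 0 ≤ h x) (g : Ω → ℝ)
    {t : Set Ω} (ht : MeasurableSet t) :
    ∫ x in t, g x * h x ∂μ = ∫ x in t, g x ∂densMeas μ h := by
  rw [densMeas, setIntegral_withDensity_eq_setIntegral_toReal_smul hmeas.ennreal_ofReal
    (ae_of_all _ fun _ => ofReal_lt_top) g ht]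
  simp only [ENNReal.toReal_ofReal (hpos _), smul_eq_mul, mul_comm]

theorem wcost_le_wcost_trunc_add_tail_general
    {E : Type*} [MetricSpace E]
    [MeasurableSpace E]
    (μ : Measure E) (hprob : IsProbabilityMeasure μ)
    (x₀ : E) (hmom : Integrable (fun y => dist y x₀ ^ 2) μ)
    (h : E → ℝ) (hmeas : Measurable h) (hpos : ∀ x, 0 ≤ h x)
    (hint : IsProbabilityMeasure (densMeas μ h))
    (hmomν : Integrable (fun x => dist x x₀ ^ 2) (densMeas μ h))
    (a : ℝ) :
    Wcost 2 (densMeas μ h) μ ≤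
      Wcost 2 (truncMeas μ h a) μ +
        ENNReal.ofReal
          (∫ x in {x | a < h x},
            (2 * dist x x₀ ^ 2 + 2 * ∫ y, dist y x₀ ^ 2 ∂μ) * h x ∂μ) := by
  set ν := densMeas μ h
  set M := ∫ y, dist y x₀ ^ 2 ∂μ
  have hs : MeasurableSet {x | h x ≤ a} := measurableSet_le hmeas measurable_const
  have htail : {x | a < h x} = {x | h x ≤ a}ᶜ := by ext; simp
  have hq : Integrable (fun x => 2 * dist x x₀ ^ 2 + 2 * M) ν :=
    (hmomν.const_mul 2).add (integrable_const _)
  calc Wcost 2 ν μ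
      ≤ Wcost 2 (truncMeas μ h a) μ +
          ∫⁻ x in {x | h x ≤ a}ᶜ, ∫⁻ y, ENNReal.ofReal (dist x y ^ (2 : ℝ)) ∂μ ∂ν :=
        wcost_le_wcost_restrict_add 2 ν μ hs
    _ ≤ Wcost 2 (truncMeas μ h a) μ +
          ∫⁻ x in {x | h x ≤ a}ᶜ, ENNReal.ofReal (2 * dist x x₀ ^ 2 + 2 * M) ∂ν := by
        gcongr with x
        simpa only [Real.rpow_two] using lintegral_dist_sq_le μ hmom x
    _ = _ := by
        rw [htail, setIntegral_mul_eq_setIntegral_densMeas hmeas hpos _ hs.compl,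
          ofReal_integral_eq_lintegral_ofReal hq.restrict (ae_of_all _ fun x => by positivity)]

/-- Inequality (3.6): `W₂²(ν,μ) ≤ W₂²(ν_a,μ) + ∫ q₂ h 1_{h>a} dμ`, where
`q₂(x) = 2 d(x,x₀)² + 2 ∫ d(y,x₀)² dμ(y)`. -/
theorem wcost_le_wcost_trunc_add_tail
    {E : Type*} [MetricSpace E] [CompleteSpace E] [TopologicalSpace.SeparableSpace E]
    [MeasurableSpace E] [BorelSpace E]
    (μ : Measure E) (hprob : IsProbabilityMeasure μ)
    (x₀ : E) (hmom : Integrable (fun y => dist y x₀ ^ 2) μ)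
    (h : E → ℝ) (hmeas : Measurable h) (hpos : ∀ x, 0 ≤ h x)
    (hint : IsProbabilityMeasure (densMeas μ h))
    (hmomν : Integrable (fun x => dist x x₀ ^ 2) (densMeas μ h))
    (a : ℝ) (ha : 0 < a) (hpos' : 0 < densMeas μ h {x | h x ≤ a}) :
    Wcost 2 (densMeas μ h) μ ≤
      Wcost 2 (truncMeas μ h a) μ +
        ENNReal.ofReal
          (∫ x in {x | a < h x},
            (2 * dist x x₀ ^ 2 + 2 * ∫ y, dist y x₀ ^ 2 ∂μ) * h x ∂μ) :=
  wcost_le_wcost_trunc_add_tail_general μ hprob x₀ hmom h hmeas hpos hint hmomν a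

end
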